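/- Generalized value difference bound: assume 0 ≤ r(s) ≤ 1 for all s ∈ S, and let γ̄ := min(c_T, γ). Then for all s, t ∈ S, c_R·|V(s) − V(t)| ≤ d(s,t) + 2·c_R·(γ − γ̄)/((1 − γ)·(1 − c_T)). -/

import Mathlib

/-!
Write `A n = |r (fⁿ s) - r (fⁿ t)| ∈ [0, 1]` and `γ̄ = min c_T γ`. Then
`|V s - V t| ≤ ∑ γⁿ A n`, and replacing the discount `γ` by the smaller `γ̄` costs at most
`∑ (γⁿ - γ̄ⁿ) = (1 - γ)⁻¹ - (1 - γ̄)⁻¹ = (γ - γ̄) / ((1 - γ)(1 - γ̄))` because `A n ≤ 1`.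
Since `γ̄ ≤ c_T`, the remaining sum `∑ γ̄ⁿ A n` is at most `∑ c_Tⁿ A n = d(s, t) / c_R`.
-/

/-- The deterministic on-policy bisimulation metric. -/
noncomputable def bisimD {S : Type*} (f : S → S) (r : S → ℝ) (cR cT : ℝ)
    (s t : S) : ℝ :=
  cR * ∑' n : ℕ, cT ^ n * |r (f^[n] s) - r (f^[n] t)|

/-- The value function with discount `γ`. -/
noncomputable def valueV {S : Type*} (f : S → S) (r : S → ℝ) (γ : ℝ) (s : S) : ℝ :=
  ∑' n : ℕ, γ ^ n * r (f^[n] s)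

open Set

section DiscountedSums

variable {a : ℕ → ℝ} {x y c : ℝ}

theorem summable_pow_mul_of_abs_le {C : ℝ} (hx : |x| < 1) (ha : ∀ n, |a n| ≤ C) :
    Summable fun n => x ^ n * a n := by
  refine ((summable_geometric_of_abs_lt_one hx).norm.mul_right C).of_norm_bounded fun n => ?_
  rw [norm_mul, norm_pow]
  exact mul_le_mul_of_nonneg_left (ha n) (by positivity)

theorem summable_pow_mul_of_mem_Icc (hx0 : 0 ≤ x) (hx1 : x < 1) (ha : ∀ n, a n ∈ Icc (0 : ℝ) 1) :
    Summable fun n => x ^ n * a n :=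
  summable_pow_mul_of_abs_le (C := 1) ((abs_of_nonneg hx0).trans_lt hx1)
    fun n => abs_le.2 ⟨by linarith [(ha n).1], (ha n).2⟩

theorem tsum_pow_mul_le_of_le (hx0 : 0 ≤ x) (hxy : x ≤ y) (hy1 : y < 1)
    (ha : ∀ n, a n ∈ Icc (0 : ℝ) 1) :
    ∑' n, x ^ n * a n ≤ ∑' n, y ^ n * a n :=
  (summable_pow_mul_of_mem_Icc hx0 (hxy.trans_lt hy1) ha).tsum_le_tsum
    (fun n => mul_le_mul_of_nonneg_right (pow_le_pow_left₀ hx0 hxy n) (ha n).1)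
    (summable_pow_mul_of_mem_Icc (hx0.trans hxy) hy1 ha)

theorem tsum_pow_mul_le_tsum_pow_mul_add (hx0 : 0 ≤ x) (hxy : x ≤ y) (hy1 : y < 1)
    (ha : ∀ n, a n ∈ Icc (0 : ℝ) 1) :
    ∑' n, y ^ n * a n ≤ ∑' n, x ^ n * a n + ((1 - y)⁻¹ - (1 - x)⁻¹) := by
  have hx1 : x < 1 := hxy.trans_lt hy1
  have hgeom_y := summable_geometric_of_lt_one (hx0.trans hxy) hy1
  have hgeom_x := summable_geometric_of_lt_one hx0 hx1
  have hsum_x := summable_pow_mul_of_mem_Icc hx0 hx1 ha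
  calc ∑' n, y ^ n * a n ≤ ∑' n, (x ^ n * a n + (y ^ n - x ^ n)) := by
        refine (summable_pow_mul_of_mem_Icc (hx0.trans hxy) hy1 ha).tsum_le_tsum (fun n => ?_)
          (hsum_x.add (hgeom_y.sub hgeom_x))
        have hpow : x ^ n ≤ y ^ n := pow_le_pow_left₀ hx0 hxy n
        nlinarith [(ha n).2]
    _ = ∑' n, x ^ n * a n + ((1 - y)⁻¹ - (1 - x)⁻¹) := by
        rw [hsum_x.tsum_add (hgeom_y.sub hgeom_x), hgeom_y.tsum_sub hgeom_x,
          tsum_geometric_of_lt_one (hx0.trans hxy) hy1, tsum_geometric_of_lt_one hx0 hx1]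

theorem inv_one_sub_sub_inv_one_sub_le (hxy : x ≤ y) (hy1 : y < 1) (hxc : x ≤ c) (hc1 : c < 1) :
    (1 - y)⁻¹ - (1 - x)⁻¹ ≤ (y - x) / ((1 - y) * (1 - c)) := by
  rw [inv_sub_inv (by linarith) (by linarith), sub_sub_sub_cancel_left]
  gcongr

theorem tsum_pow_mul_le_tsum_pow_mul_add_div (hc0 : 0 ≤ c) (hc1 : c < 1) (hy0 : 0 ≤ y)
    (hy1 : y < 1) (ha : ∀ n, a n ∈ Icc (0 : ℝ) 1) :
    ∑' n, y ^ n * a n ≤ ∑' n, c ^ n * a n + (y - min c y) / ((1 - y) * (1 - c)) := by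
  have hmin0 : 0 ≤ min c y := le_min hc0 hy0
  calc ∑' n, y ^ n * a n
      ≤ ∑' n, min c y ^ n * a n + ((1 - y)⁻¹ - (1 - min c y)⁻¹) :=
        tsum_pow_mul_le_tsum_pow_mul_add hmin0 (min_le_right c y) hy1 ha
    _ ≤ ∑' n, c ^ n * a n + (y - min c y) / ((1 - y) * (1 - c)) :=
        add_le_add (tsum_pow_mul_le_of_le hmin0 (min_le_left c y) hc1 ha)
          (inv_one_sub_sub_inv_one_sub_le (min_le_right c y) hy1 (min_le_left c y) hc1)

end DiscountedSums

theorem abs_valueV_sub_le {S : Type*} (f : S → S) (r : S → ℝ) {C γ : ℝ} (hγ0 : 0 ≤ γ)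
    (hγ1 : γ < 1) (hr : ∀ s, |r s| ≤ C) (s t : S) :
    |valueV f r γ s - valueV f r γ t| ≤ ∑' n, γ ^ n * |r (f^[n] s) - r (f^[n] t)| := by
  have hγ : |γ| < 1 := (abs_of_nonneg hγ0).trans_lt hγ1
  have hsum : ∀ s, Summable fun n => γ ^ n * r (f^[n] s) :=
    fun s => summable_pow_mul_of_abs_le hγ fun n => hr _
  have hterm : ∀ n, γ ^ n * r (f^[n] s) - γ ^ n * r (f^[n] t) =
      γ ^ n * (r (f^[n] s) - r (f^[n] t)) := fun n => (mul_sub _ _ _).symm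
  have habs : ∀ n, |γ ^ n * (r (f^[n] s) - r (f^[n] t))| = γ ^ n * |r (f^[n] s) - r (f^[n] t)| :=
    fun n => by rw [abs_mul, abs_of_nonneg (pow_nonneg hγ0 n)]
  have hsum_abs : Summable fun n => γ ^ n * |r (f^[n] s) - r (f^[n] t)| :=
    summable_pow_mul_of_abs_le hγ fun n =>
      (abs_abs _).trans_le <| (abs_sub _ _).trans (add_le_add (hr _) (hr _))
  rw [valueV, valueV, ← (hsum s).tsum_sub (hsum t)]
  calc |∑' n, (γ ^ n * r (f^[n] s) - γ ^ n * r (f^[n] t))|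
      = ‖∑' n, γ ^ n * (r (f^[n] s) - r (f^[n] t))‖ := by simp only [hterm, Real.norm_eq_abs]
    _ ≤ ∑' n, ‖γ ^ n * (r (f^[n] s) - r (f^[n] t))‖ :=
        norm_tsum_le_tsum_norm (by simpa only [Real.norm_eq_abs, habs] using hsum_abs)
    _ = ∑' n, γ ^ n * |r (f^[n] s) - r (f^[n] t)| := by simp only [Real.norm_eq_abs, habs]

theorem generalized_value_diff_bound_general
    {S : Type*} (f : S → S) (r : S → ℝ)
    (hr : ∀ s, 0 ≤ r s ∧ r s ≤ 1)
    (cR cT γ : ℝ) (hcR : 0 ≤ cR) (hcT0 : 0 ≤ cT) (hcT1 : cT < 1)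
    (hγ0 : 0 ≤ γ) (hγ1 : γ < 1) :
    ∀ s t : S, cR * |valueV f r γ s - valueV f r γ t| ≤
      bisimD f r cR cT s t +
        2 * cR * (γ - min cT γ) / ((1 - γ) * (1 - cT)) := by
  intro s t
  have hA : ∀ n, |r (f^[n] s) - r (f^[n] t)| ∈ Icc (0 : ℝ) 1 := fun n =>
    ⟨abs_nonneg _, abs_sub_le_of_nonneg_of_le (hr _).1 (hr _).2 (hr _).1 (hr _).2⟩
  have hr_abs : ∀ s, |r s| ≤ 1 := fun s => abs_le.2 ⟨by linarith [(hr s).1], (hr s).2⟩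
  have hpenalty : 0 ≤ (γ - min cT γ) / ((1 - γ) * (1 - cT)) :=
    div_nonneg (sub_nonneg.2 (min_le_right cT γ)) (mul_nonneg (by linarith) (by linarith))
  calc cR * |valueV f r γ s - valueV f r γ t|
      ≤ cR * ∑' n, γ ^ n * |r (f^[n] s) - r (f^[n] t)| := by
        gcongr
        exact abs_valueV_sub_le f r hγ0 hγ1 hr_abs s t
    _ ≤ cR * (∑' n, cT ^ n * |r (f^[n] s) - r (f^[n] t)| +
          (γ - min cT γ) / ((1 - γ) * (1 - cT))) := by
        gcongr
        exact tsum_pow_mul_le_tsum_pow_mul_add_div hcT0 hcT1 hγ0 hγ1 hA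
    _ ≤ bisimD f r cR cT s t + 2 * cR * (γ - min cT γ) / ((1 - γ) * (1 - cT)) := by
        rw [bisimD, mul_add, mul_div_assoc, mul_assoc]
        nlinarith [mul_nonneg hcR hpenalty]

/-- Generalized value difference bound: if `0 ≤ r s ≤ 1` and
`γ̄ = min(c_T, γ)`, then
`c_R·|V s − V t| ≤ d(s,t) + 2·c_R·(γ − γ̄)/((1 − γ)·(1 − c_T))`. -/
theorem generalized_value_diff_bound
    {S : Type*} [Nonempty S] (f : S → S) (r : S → ℝ)
    (hr : ∀ s, 0 ≤ r s ∧ r s ≤ 1)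
    (cR cT γ : ℝ) (hcR : 0 ≤ cR) (hcT0 : 0 ≤ cT) (hcT1 : cT < 1)
    (hγ0 : 0 ≤ γ) (hγ1 : γ < 1) :
    ∀ s t : S, cR * |valueV f r γ s - valueV f r γ t| ≤
      bisimD f r cR cT s t +
        2 * cR * (γ - min cT γ) / ((1 - γ) * (1 - cT)) :=
  generalized_value_diff_bound_general f r hr cR cT γ hcR hcT0 hcT1 hγ0 hγ1
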